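/- Fix 0 ≤ x < y ≤ 1 with y > 0 and assume r₂(x, y) ≠ 1. Then the partial derivative ∂h^F/∂y (x, y) has the same sign as ξ'''(y)(ξ'(y) − ξ'(x))(y − x) + 2ξ''(y)(ξ'(y) − ξ'(x) − ξ''(y)(y − x)); that is, ∂h^F/∂y (x,y) is positive, zero, or negative exactly when that expression is positive, zero, or negative respectively. -/

import Mathlib

noncomputable section

/-- The mixed p-spin function `ξ(x) = Σ_j λ_j x^{p_j}`. -/
def xiF (n : ℕ) (p : Fin n → ℕ) (lam : Fin n → ℝ) : ℝ → ℝ :=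
  fun x => ∑ j, lam j * x ^ p j

/-- `h(x,y,z)`. -/
def hfun (ξ : ℝ → ℝ) (x y z : ℝ) : ℝ :=
  ξ y - ξ x - deriv ξ x * (y - x) +
    (deriv ξ y - deriv ξ x) * (y - x) * (1 / (z - 1) - z / (z - 1) ^ 2 * Real.log z)

/-- `r₂(x,y)`. -/
def r2f (ξ : ℝ → ℝ) (x y : ℝ) : ℝ :=
  deriv (deriv ξ) y * (y - x) / (deriv ξ y - deriv ξ x)

open Real Finset Set

/-! Write `h(x, y, z) = ξ y - ξ x - ξ'(x)(y - x) + (ξ'(y) - ξ'(x))(y - x) g(z)`. The factor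
`g` satisfies `1 + (z + 1) g(z) = z (1 - z) g'(z)`, with
`g'(z) = ((z + 1) log z - 2(z - 1)) / (z - 1)³`, and this identity makes the chain rule for
`y ↦ h(x, y, r₂(x, y))` collapse to `∂h^F/∂y = (y - x) / (ξ'(y) - ξ'(x)) · g'(r₂) · E`, where
`E` is the expression of the statement. Both prefactors are positive: `ξ'` is strictly increasing
on `[0, ∞)`, and `g'(z) > 0` for `0 < z ≠ 1` because `(t + 1) log t - 2(t - 1)` increases
through `0` at `t = 1`. -/

section MixedPSpin

variable {n : ℕ} {p : Fin n → ℕ} {lam : Fin n → ℝ}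

theorem hasDerivAt_xiF (v : ℝ) :
    HasDerivAt (xiF n p lam) (xiF n (fun j => p j - 1) (fun j => lam j * p j) v) v := by
  unfold xiF
  refine HasDerivAt.fun_sum fun j _ => ?_
  simpa only [mul_assoc] using (hasDerivAt_pow (p j) v).const_mul (lam j)

theorem deriv_xiF : deriv (xiF n p lam) = xiF n (fun j => p j - 1) (fun j => lam j * p j) :=
  funext fun v => (hasDerivAt_xiF v).deriv

theorem differentiable_xiF : Differentiable ℝ (xiF n p lam) :=
  fun v => (hasDerivAt_xiF v).differentiableAt

theorem xiF_pos (hn : 0 < n) (hlam : ∀ j, 0 < lam j) {v : ℝ} (hv : 0 < v) :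
    0 < xiF n p lam v :=
  Finset.sum_pos (fun j _ => mul_pos (hlam j) (pow_pos hv _)) ⟨⟨0, hn⟩, mem_univ _⟩

theorem strictMonoOn_xiF (hn : 0 < n) (hp : ∀ j, p j ≠ 0) (hlam : ∀ j, 0 < lam j) :
    StrictMonoOn (xiF n p lam) (Ici 0) := fun _ ha _ _ hab =>
  Finset.sum_lt_sum_of_nonempty ⟨⟨0, hn⟩, mem_univ _⟩ fun j _ =>
    mul_lt_mul_of_pos_left (pow_lt_pow_left₀ hab ha (hp j)) (hlam j)

end MixedPSpin

def hFactor (z : ℝ) : ℝ := 1 / (z - 1) - z / (z - 1) ^ 2 * log z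

def hFactorDerivNum (t : ℝ) : ℝ := (t + 1) * log t - 2 * (t - 1)

def hFactorDeriv (z : ℝ) : ℝ := hFactorDerivNum z / (z - 1) ^ 3

theorem hasDerivAt_hFactor {z : ℝ} (hz : 0 < z) (hz1 : z ≠ 1) :
    HasDerivAt hFactor (hFactorDeriv z) z := by
  have hz1' : z - 1 ≠ 0 := sub_ne_zero.2 hz1
  have hsub : HasDerivAt (fun t : ℝ => t - 1) 1 z := (hasDerivAt_id z).sub_const 1
  refine (((hasDerivAt_const z (1 : ℝ)).div hsub hz1').sub
    (((hasDerivAt_id z).div (hsub.pow 2) (pow_ne_zero 2 hz1')).mul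
      (hasDerivAt_log hz.ne'))).congr_deriv ?_
  simp only [hFactorDeriv, hFactorDerivNum, Pi.pow_apply, Pi.div_apply, id]
  field_simp
  ring

theorem hasDerivAt_hFactorDerivNum {t : ℝ} (ht : 0 < t) :
    HasDerivAt hFactorDerivNum (log t + t⁻¹ - 1) t := by
  refine ((((hasDerivAt_id t).add_const 1).mul (hasDerivAt_log ht.ne')).sub
    (((hasDerivAt_id t).sub_const 1).const_mul 2)).congr_deriv ?_
  simp only [id]
  field_simp
  ring

theorem strictMonoOn_hFactorDerivNum {D : Set ℝ} (hD : Convex ℝ D) (hD0 : D ⊆ Ioi 0)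
    (hD1 : 1 ∉ interior D) : StrictMonoOn hFactorDerivNum D := by
  refine strictMonoOn_of_hasDerivWithinAt_pos hD
    (fun t ht => (hasDerivAt_hFactorDerivNum (hD0 ht)).continuousAt.continuousWithinAt)
    (fun t ht => (hasDerivAt_hFactorDerivNum (hD0 (interior_subset ht))).hasDerivWithinAt)
    fun t ht => ?_
  have ht0 : 0 < t := hD0 (interior_subset ht)
  have hlog := log_lt_sub_one_of_pos (inv_pos.2 ht0) (inv_ne_one.2 (ne_of_mem_of_not_mem ht hD1))
  rw [log_inv] at hlog
  linarith

theorem hFactorDeriv_pos {z : ℝ} (hz : 0 < z) (hz1 : z ≠ 1) : 0 < hFactorDeriv z := by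
  have h1 : hFactorDerivNum 1 = 0 := by simp [hFactorDerivNum]
  rcases hz1.lt_or_gt with hlt | hgt
  · have := strictMonoOn_hFactorDerivNum (convex_Icc z 1) (fun t ht => hz.trans_le ht.1)
      (by simp) (left_mem_Icc.2 hlt.le) (right_mem_Icc.2 hlt.le) hlt
    exact div_pos_of_neg_of_neg (by linarith) (Odd.pow_neg (by decide) (by linarith))
  · have := strictMonoOn_hFactorDerivNum (convex_Icc 1 z) (fun t ht => one_pos.trans_le ht.1)
      (by simp) (left_mem_Icc.2 hgt.le) (right_mem_Icc.2 hgt.le) hgt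
    exact div_pos (by linarith) (pow_pos (by linarith) 3)

theorem one_add_mul_hFactor {z : ℝ} (hz1 : z ≠ 1) :
    1 + (z + 1) * hFactor z = z * (1 - z) * hFactorDeriv z := by
  have hz1' : z - 1 ≠ 0 := sub_ne_zero.2 hz1
  unfold hFactor hFactorDeriv hFactorDerivNum
  field_simp
  ring

section Partial

variable {ξ : ℝ → ℝ} {x y : ℝ}

theorem hasDerivAt_r2f (h₂ : DifferentiableAt ℝ (deriv ξ) y)
    (h₃ : DifferentiableAt ℝ (deriv (deriv ξ)) y) (ha : deriv ξ y - deriv ξ x ≠ 0) :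
    HasDerivAt (r2f ξ x)
      (((deriv (deriv (deriv ξ)) y * (y - x) + deriv (deriv ξ) y) *
          (deriv ξ y - deriv ξ x) - deriv (deriv ξ) y * (y - x) * deriv (deriv ξ) y) /
        (deriv ξ y - deriv ξ x) ^ 2) y := by
  refine ((h₃.hasDerivAt.mul ((hasDerivAt_id y).sub_const x)).div
    (h₂.hasDerivAt.sub_const _) ha).congr_deriv ?_
  simp only [id, mul_one, Pi.mul_apply]

theorem hasDerivAt_hfun_r2f (h₁ : DifferentiableAt ℝ ξ y)
    (h₂ : DifferentiableAt ℝ (deriv ξ) y) (h₃ : DifferentiableAt ℝ (deriv (deriv ξ)) y)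
    (ha : deriv ξ y - deriv ξ x ≠ 0) (hz : 0 < r2f ξ x y) (hz1 : r2f ξ x y ≠ 1) :
    HasDerivAt (fun v => hfun ξ x v (r2f ξ x v))
      ((y - x) / (deriv ξ y - deriv ξ x) * hFactorDeriv (r2f ξ x y) *
        (deriv (deriv (deriv ξ)) y * (deriv ξ y - deriv ξ x) * (y - x) +
          2 * deriv (deriv ξ) y * (deriv ξ y - deriv ξ x - deriv (deriv ξ) y * (y - x)))) y := by
  have hsub : HasDerivAt (fun v => v - x) 1 y := (hasDerivAt_id y).sub_const x
  refine (((h₁.hasDerivAt.sub_const (ξ x)).sub (hsub.const_mul (deriv ξ x))).add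
    (((h₂.hasDerivAt.sub_const (deriv ξ x)).mul hsub).mul
      ((hasDerivAt_hFactor hz hz1).comp y (hasDerivAt_r2f h₂ h₃ ha)))).congr_deriv ?_
  have hza : r2f ξ x y * (deriv ξ y - deriv ξ x) = deriv (deriv ξ) y * (y - x) :=
    div_mul_cancel₀ _ ha
  have hcore := one_add_mul_hFactor hz1
  simp only [Function.comp_apply, Pi.mul_apply, mul_one]
  generalize r2f ξ x y = z at hza hcore ⊢
  generalize hFactor z = g at hcore ⊢
  generalize hFactorDeriv z = g' at hcore ⊢
  generalize deriv ξ y - deriv ξ x = a at ha hza ⊢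
  field_simp
  linear_combination
    a ^ 2 * hcore + (g' * (a - z * a - deriv (deriv ξ) y * (y - x)) - a * g) * hza

end Partial

theorem sign_iff_of_eq_pos_mul {d c e : ℝ} (hc : 0 < c) (h : d = c * e) :
    (0 < d ↔ 0 < e) ∧ (d = 0 ↔ e = 0) ∧ (d < 0 ↔ e < 0) := by
  subst h
  exact ⟨mul_pos_iff_of_pos_left hc, by simp [hc.ne'],
    ⟨fun h => neg_of_mul_neg_right h hc.le, mul_neg_of_pos_of_neg hc⟩⟩

theorem hF_partial_y_sign_general
    (n : ℕ) (hn : 1 ≤ n) (p : Fin n → ℕ) (hp2 : ∀ i, 2 < p i)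
    (lam : Fin n → ℝ) (hlam : ∀ i, 0 < lam i)
    (x y : ℝ) (hx : 0 ≤ x) (hxy : x < y)
    (hr : r2f (xiF n p lam) x y ≠ 1) :
    (0 < deriv (fun v => hfun (xiF n p lam) x v (r2f (xiF n p lam) x v)) y ↔
        0 < deriv (deriv (deriv (xiF n p lam))) y *
              (deriv (xiF n p lam) y - deriv (xiF n p lam) x) * (y - x) +
            2 * deriv (deriv (xiF n p lam)) y *
              (deriv (xiF n p lam) y - deriv (xiF n p lam) x -
                deriv (deriv (xiF n p lam)) y * (y - x))) ∧
    (deriv (fun v => hfun (xiF n p lam) x v (r2f (xiF n p lam) x v)) y = 0 ↔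
        deriv (deriv (deriv (xiF n p lam))) y *
            (deriv (xiF n p lam) y - deriv (xiF n p lam) x) * (y - x) +
          2 * deriv (deriv (xiF n p lam)) y *
            (deriv (xiF n p lam) y - deriv (xiF n p lam) x -
              deriv (deriv (xiF n p lam)) y * (y - x)) = 0) ∧
    (deriv (fun v => hfun (xiF n p lam) x v (r2f (xiF n p lam) x v)) y < 0 ↔
        deriv (deriv (deriv (xiF n p lam))) y *
            (deriv (xiF n p lam) y - deriv (xiF n p lam) x) * (y - x) +
          2 * deriv (deriv (xiF n p lam)) y *
            (deriv (xiF n p lam) y - deriv (xiF n p lam) x -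
              deriv (deriv (xiF n p lam)) y * (y - x)) < 0) := by
  set ξ := xiF n p lam
  have hu : 0 < y - x := sub_pos.2 hxy
  have hp : ∀ j, 0 < p j - 1 := fun j => Nat.sub_pos_of_lt (one_lt_two.trans (hp2 j))
  have hlam' : ∀ j, 0 < lam j * p j := fun j =>
    mul_pos (hlam j) (Nat.cast_pos.2 (Nat.zero_lt_of_lt (hp2 j)))
  have ha : 0 < deriv ξ y - deriv ξ x := by
    rw [sub_pos, deriv_xiF]
    exact strictMonoOn_xiF hn (fun j => (hp j).ne') hlam' hx (hx.trans hxy.le) hxy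
  have hb : 0 < deriv (deriv ξ) y := by
    rw [deriv_xiF, deriv_xiF]
    exact xiF_pos hn (fun j => mul_pos (hlam' j) (Nat.cast_pos.2 (hp j))) (hx.trans_lt hxy)
  have hz : 0 < r2f ξ x y := div_pos (mul_pos hb hu) ha
  have hderiv := hasDerivAt_hfun_r2f (differentiable_xiF y)
    (by rw [deriv_xiF]; exact differentiable_xiF y)
    (by rw [deriv_xiF, deriv_xiF]; exact differentiable_xiF y) ha.ne' hz hr
  exact sign_iff_of_eq_pos_mul (mul_pos (div_pos hu ha) (hFactorDeriv_pos hz hr)) hderiv.deriv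

/-- For `0 ≤ x < y ≤ 1` with `y > 0` and `r₂(x,y) ≠ 1`, the partial
derivative `∂h^F/∂y (x,y)`, where `h^F(x,y) = h(x, y, r₂(x,y))`, has the same sign as
`ξ'''(y)(ξ'(y) - ξ'(x))(y-x) + 2ξ''(y)(ξ'(y) - ξ'(x) - ξ''(y)(y-x))`. -/
theorem hF_partial_y_sign
    (n : ℕ) (hn : 1 ≤ n) (p : Fin n → ℕ) (hp2 : ∀ i, 2 < p i) (hpmono : StrictMono p)
    (lam : Fin n → ℝ) (hlam : ∀ i, 0 < lam i) (hlamsum : ∑ i, lam i = 1)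
    (x y : ℝ) (hx : 0 ≤ x) (hxy : x < y) (hy : y ≤ 1) (hy0 : 0 < y)
    (hr : r2f (xiF n p lam) x y ≠ 1) :
    (0 < deriv (fun v => hfun (xiF n p lam) x v (r2f (xiF n p lam) x v)) y ↔
        0 < deriv (deriv (deriv (xiF n p lam))) y *
              (deriv (xiF n p lam) y - deriv (xiF n p lam) x) * (y - x) +
            2 * deriv (deriv (xiF n p lam)) y *
              (deriv (xiF n p lam) y - deriv (xiF n p lam) x -
                deriv (deriv (xiF n p lam)) y * (y - x))) ∧
    (deriv (fun v => hfun (xiF n p lam) x v (r2f (xiF n p lam) x v)) y = 0 ↔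
        deriv (deriv (deriv (xiF n p lam))) y *
            (deriv (xiF n p lam) y - deriv (xiF n p lam) x) * (y - x) +
          2 * deriv (deriv (xiF n p lam)) y *
            (deriv (xiF n p lam) y - deriv (xiF n p lam) x -
              deriv (deriv (xiF n p lam)) y * (y - x)) = 0) ∧
    (deriv (fun v => hfun (xiF n p lam) x v (r2f (xiF n p lam) x v)) y < 0 ↔
        deriv (deriv (deriv (xiF n p lam))) y *
            (deriv (xiF n p lam) y - deriv (xiF n p lam) x) * (y - x) +
          2 * deriv (deriv (xiF n p lam)) y *
            (deriv (xiF n p lam) y - deriv (xiF n p lam) x -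
              deriv (deriv (xiF n p lam)) y * (y - x)) < 0) :=
  hF_partial_y_sign_general n hn p hp2 lam hlam x y hx hxy hr
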